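/- arXiv:2403.07989 — 4 statements merged into one kernel-verified Lean document; each statement's English description precedes it below -/
import Mathlib

section
/- The total number of independent sets of the cycle graph C_n on n ≥ 3 vertices equals the n-th Lucas number L_n, where L_1 = 1, L_2 = 3, and L_{n+2} = L_{n+1} + L_n. -/
/-- The cycle graph on `n` vertices (for `n ≥ 3`): `i` is adjacent to `i + 1 (mod n)`. -/
def cycleGraph (n : ℕ) : SimpleGraph (Fin n) :=
  SimpleGraph.fromRel (fun i j => (i.val + 1) % n = j.val)

/-- The Lucas numbers: `L₁ = 1`, `L₂ = 3`, `L_{n+2} = L_{n+1} + L_n` (with `L₀ = 2`). -/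
def lucas : ℕ → ℕ
  | 0 => 2
  | 1 => 1
  | n + 2 => lucas (n + 1) + lucas n

def noTwo (t : Finset ℕ) : Prop := ∀ i ∈ t, i + 1 ∉ t

instance : DecidablePred noTwo := fun _ => Finset.decidableDforallFinset

lemma noTwo_mono {s t : Finset ℕ} (h : s ⊆ t) (ht : noTwo t) : noTwo s :=
  fun i hi hi1 => ht i (h hi) (h hi1)

def pathSets (a b : ℕ) : Finset (Finset ℕ) :=
  (Finset.Ico a b).powerset.filter noTwo

lemma pathSets_card : ∀ k a, (pathSets a (a + k)).card = Nat.fib (k + 2) := by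
  intro k
  induction k using Nat.strong_induction_on with
  | _ k ih =>
    match k with
    | 0 =>
      intro a
      rw [pathSets, Nat.add_zero, Finset.Ico_self, Finset.powerset_empty]
      rw [Finset.filter_true_of_mem ?_]
      · rfl
      · intro t ht
        simp only [Finset.mem_singleton] at ht
        subst ht
        intro i hi
        simp at hi
    | 1 =>
      intro a
      rw [pathSets, Nat.Ico_succ_singleton]
      rw [Finset.filter_true_of_mem (by
        intro t ht
        rw [Finset.mem_powerset] at ht
        intro i hi hi1
        have h1 := Finset.mem_singleton.mp (ht hi)
        have h2 := Finset.mem_singleton.mp (ht hi1)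
        omega)]
      simp only [Finset.card_powerset, Finset.card_singleton]
      decide
    | (k + 2) =>
      intro a
      have hsplit := Finset.card_filter_add_card_filter_not
        (s := pathSets a (a + (k + 2))) (fun t => a + k + 1 ∈ t)
      have h1 : (pathSets a (a + (k + 2))).filter (fun t => ¬ (a + k + 1 ∈ t))
          = pathSets a (a + (k + 1)) := by
        ext t
        simp only [pathSets, Finset.mem_filter, Finset.mem_powerset]
        constructor
        · rintro ⟨⟨hsub, hnt⟩, hm⟩
          refine ⟨fun x hx => ?_, hnt⟩
          have := hsub hx
          rw [Finset.mem_Ico] at this ⊢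
          have : x ≠ a + k + 1 := fun h => hm (h ▸ hx)
          have := Finset.mem_Ico.mp (hsub hx)
          omega
        · rintro ⟨hsub, hnt⟩
          have hsub' : t ⊆ Finset.Ico a (a + (k + 2)) := by
            intro x hx
            have := Finset.mem_Ico.mp (hsub hx)
            rw [Finset.mem_Ico]; omega
          refine ⟨⟨hsub', hnt⟩, fun hm => ?_⟩
          have := Finset.mem_Ico.mp (hsub hm)
          omega
      have h2 : ((pathSets a (a + (k + 2))).filter (fun t => a + k + 1 ∈ t)).card
          = (pathSets a (a + k)).card := by
        refine Finset.card_bij' (fun t _ => t.erase (a + k + 1))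
          (fun s _ => insert (a + k + 1) s) ?hi ?hj ?li ?ri
        case hi =>
          intro t ht
          simp only [Finset.mem_filter, pathSets, Finset.mem_powerset] at ht ⊢
          obtain ⟨⟨hsub, hnt⟩, hm⟩ := ht
          constructor
          · intro x hx
            rw [Finset.mem_erase] at hx
            obtain ⟨hx1, hx2⟩ := hx
            have := Finset.mem_Ico.mp (hsub hx2)
            have hxk : x ≠ a + k := by
              intro h; exact hnt x hx2 (by rw [h]; exact hm)
            rw [Finset.mem_Ico]; omega
          · exact noTwo_mono (Finset.erase_subset _ _) hnt
        case hj =>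
          intro s hs
          simp only [Finset.mem_filter, pathSets, Finset.mem_powerset] at hs ⊢
          obtain ⟨hsub, hnt⟩ := hs
          refine ⟨⟨?_, ?_⟩, Finset.mem_insert_self _ _⟩
          · intro x hx
            rw [Finset.mem_insert] at hx
            rcases hx with h | h
            · rw [Finset.mem_Ico]; omega
            · have := Finset.mem_Ico.mp (hsub h)
              rw [Finset.mem_Ico]; omega
          · intro i hi hi1
            rw [Finset.mem_insert] at hi hi1
            rcases hi with h | h
            · rcases hi1 with h' | h'
              · omega
              · have := Finset.mem_Ico.mp (hsub h'); omega
            · rcases hi1 with h' | h'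
              · have := Finset.mem_Ico.mp (hsub h); omega
              · exact hnt i h h'
        case li =>
          intro t ht
          simp only [Finset.mem_filter] at ht
          exact Finset.insert_erase ht.2
        case ri =>
          intro s hs
          simp only [pathSets, Finset.mem_filter, Finset.mem_powerset] at hs
          apply Finset.erase_insert
          intro h
          have := Finset.mem_Ico.mp (hs.1 h)
          omega
      rw [h1] at hsplit
      rw [h2] at hsplit
      have i1 := ih (k + 1) (by omega) a
      have i2 := ih k (by omega) a
      have e1 : Nat.fib (k + 2 + 2) = Nat.fib (k + 2) + Nat.fib (k + 2 + 1) :=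
        Nat.fib_add_two
      have e2 : Nat.fib (k + 2 + 1) = Nat.fib (k + 1 + 2) := rfl
      omega

def cycleSets (n : ℕ) : Finset (Finset ℕ) :=
  (Finset.range n).powerset.filter (fun t => noTwo t ∧ ¬(0 ∈ t ∧ n - 1 ∈ t))

lemma pathSets_card' (a b : ℕ) (h : a ≤ b) :
    (pathSets a b).card = Nat.fib (b - a + 2) := by
  have := pathSets_card (b - a) a
  rwa [Nat.add_sub_cancel' h] at this

lemma cycleSets_card (n : ℕ) (hn : 3 ≤ n) :
    (cycleSets n).card = Nat.fib (n + 1) + Nat.fib (n - 1) := by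
  have hsplit := Finset.card_filter_add_card_filter_not
    (s := cycleSets n) (fun t => 0 ∈ t)
  have h1 : (cycleSets n).filter (fun t => ¬ (0 ∈ t)) = pathSets 1 n := by
    ext t
    simp only [cycleSets, pathSets, Finset.mem_filter, Finset.mem_powerset]
    constructor
    · rintro ⟨⟨hsub, hnt, _⟩, h0⟩
      refine ⟨fun x hx => ?_, hnt⟩
      have := Finset.mem_range.mp (hsub hx)
      have : x ≠ 0 := fun h => h0 (h ▸ hx)
      rw [Finset.mem_Ico]; omega
    · rintro ⟨hsub, hnt⟩
      have h0 : 0 ∉ t := fun h => by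
        have := Finset.mem_Ico.mp (hsub h); omega
      refine ⟨⟨fun x hx => ?_, hnt, fun h => h0 h.1⟩, h0⟩
      have := Finset.mem_Ico.mp (hsub hx)
      rw [Finset.mem_range]; omega
  have h2 : ((cycleSets n).filter (fun t => 0 ∈ t)).card
      = (pathSets 2 (n - 1)).card := by
    refine Finset.card_bij' (fun t _ => t.erase 0)
      (fun s _ => insert 0 s) ?hi ?hj ?li ?ri
    case hi =>
      intro t ht
      simp only [cycleSets, pathSets, Finset.mem_filter, Finset.mem_powerset] at ht ⊢
      obtain ⟨⟨hsub, hnt, hc⟩, h0⟩ := ht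
      refine ⟨fun x hx => ?_, noTwo_mono (Finset.erase_subset _ _) hnt⟩
      rw [Finset.mem_erase] at hx
      obtain ⟨hx0, hxt⟩ := hx
      have hlt := Finset.mem_range.mp (hsub hxt)
      have hx1 : x ≠ 1 := by
        intro h
        subst h
        exact hnt 0 h0 hxt
      have hxn : x ≠ n - 1 := fun h => hc ⟨h0, h ▸ hxt⟩
      rw [Finset.mem_Ico]; omega
    case hj =>
      intro s hs
      simp only [cycleSets, pathSets, Finset.mem_filter, Finset.mem_powerset] at hs ⊢
      obtain ⟨hsub, hnt⟩ := hs
      have hmem : ∀ x ∈ s, 2 ≤ x ∧ x < n - 1 := fun x hx =>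
        Finset.mem_Ico.mp (hsub hx)
      refine ⟨⟨fun x hx => ?_, ?_, ?_⟩, Finset.mem_insert_self _ _⟩
      · rw [Finset.mem_insert] at hx
        rcases hx with h | h
        · rw [Finset.mem_range]; omega
        · have := hmem x h; rw [Finset.mem_range]; omega
      · intro i hi hi1
        rw [Finset.mem_insert] at hi hi1
        rcases hi with h | h
        · rcases hi1 with h' | h'
          · omega
          · have := hmem _ h'; omega
        · rcases hi1 with h' | h'
          · omega
          · exact hnt i h h'
      · rintro ⟨-, hn1⟩
        rw [Finset.mem_insert] at hn1
        rcases hn1 with h | h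
        · omega
        · have := hmem _ h; omega
    case li =>
      intro t ht
      simp only [Finset.mem_filter] at ht
      exact Finset.insert_erase ht.2
    case ri =>
      intro s hs
      simp only [pathSets, Finset.mem_filter, Finset.mem_powerset] at hs
      apply Finset.erase_insert
      intro h
      have := Finset.mem_Ico.mp (hs.1 h)
      omega
  rw [h1] at hsplit
  rw [h2] at hsplit
  rw [pathSets_card' 1 n (by omega)] at hsplit
  rw [pathSets_card' 2 (n - 1) (by omega)] at hsplit
  have e1 : n - 1 + 2 = n + 1 := by omega
  have e2 : n - 1 - 2 + 2 = n - 1 := by omega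
  rw [e1, e2] at hsplit
  omega

lemma lucas_fib : ∀ m, lucas (m + 1) = Nat.fib m + Nat.fib (m + 2) := by
  intro m
  induction m using Nat.strong_induction_on with
  | _ m ih =>
    match m with
    | 0 => decide
    | 1 => decide
    | (m + 2) =>
      have i1 := ih (m + 1) (by omega)
      have i2 := ih m (by omega)
      have e1 : Nat.fib (m + 2) = Nat.fib m + Nat.fib (m + 1) := Nat.fib_add_two
      have e2 : Nat.fib (m + 2 + 2) = Nat.fib (m + 2) + Nat.fib (m + 2 + 1) :=
        Nat.fib_add_two
      have e3 : Nat.fib (m + 2 + 1) = Nat.fib (m + 1 + 2) := rfl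
      have e4 : lucas (m + 1 + 1) = lucas (m + 2) := rfl
      show lucas (m + 2) + lucas (m + 1) = _
      omega

/-- The total number of independent sets of the cycle graph `Cₙ`
on `n ≥ 3` vertices equals the `n`-th Lucas number. -/
theorem totalIndepSets_cycleGraph (n : ℕ) (hn : 3 ≤ n) :
    Nat.card {t : Finset (Fin n) //
      ∀ i ∈ t, ∀ j ∈ t, ¬ (cycleGraph n).Adj i j} = lucas n := by
  classical
  rw [Nat.card_eq_fintype_card, Fintype.card_subtype]
  have key : (Finset.univ.filter (fun t : Finset (Fin n) =>
      ∀ i ∈ t, ∀ j ∈ t, ¬ (cycleGraph n).Adj i j)).card = (cycleSets n).card := by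
    refine Finset.card_bij' (fun t _ => t.image Fin.val)
      (fun s hs => s.attachFin (fun m hm => Finset.mem_range.mp
        ((Finset.mem_powerset.mp (Finset.mem_filter.mp hs).1) hm)))
      ?hi ?hj ?li ?ri
    case hi =>
      intro t ht
      rw [Finset.mem_filter] at ht
      replace ht := ht.2
      simp only [cycleSets, Finset.mem_filter, Finset.mem_powerset]
      refine ⟨fun x hx => ?_, ?_, ?_⟩
      · rw [Finset.mem_image] at hx
        obtain ⟨i, -, rfl⟩ := hx
        exact Finset.mem_range.mpr i.isLt
      · intro a ha ha1
        rw [Finset.mem_image] at ha ha1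
        obtain ⟨i, hi, rfl⟩ := ha
        obtain ⟨j, hj, hij⟩ := ha1
        refine ht i hi j hj ?_
        rw [cycleGraph, SimpleGraph.fromRel_adj]
        have hjn : (i.val + 1) < n := by omega
        refine ⟨fun h => ?_, Or.inl ?_⟩
        · rw [h] at hij; omega
        · rw [Nat.mod_eq_of_lt hjn]; omega
      · rintro ⟨h0, hn1⟩
        rw [Finset.mem_image] at h0 hn1
        obtain ⟨j, hj, hj0⟩ := h0
        obtain ⟨i, hi, hin⟩ := hn1
        refine ht i hi j hj ?_
        rw [cycleGraph, SimpleGraph.fromRel_adj]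
        refine ⟨fun h => ?_, Or.inl ?_⟩
        · rw [h] at hin; omega
        · rw [hin, hj0]
          have : n - 1 + 1 = n := by omega
          rw [this, Nat.mod_self]
    case hj =>
      intro s hs
      rw [Finset.mem_filter]
      refine ⟨Finset.mem_univ _, ?_⟩
      simp only [cycleSets, Finset.mem_filter, Finset.mem_powerset] at hs
      obtain ⟨hsub, hnt, hc⟩ := hs
      intro i hi j hj hadj
      rw [Finset.mem_attachFin] at hi hj
      rw [cycleGraph, SimpleGraph.fromRel_adj] at hadj
      obtain ⟨hne, hr⟩ := hadj
      have hvne : i.val ≠ j.val := fun h => hne (Fin.ext h)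
      rcases hr with h | h
      · rcases Nat.lt_or_ge (i.val + 1) n with hlt | hge
        · rw [Nat.mod_eq_of_lt hlt] at h
          exact hnt i.val hi (h ▸ hj)
        · have hin : i.val = n - 1 := by omega
          have : (i.val + 1) % n = 0 := by
            have : i.val + 1 = n := by omega
            rw [this, Nat.mod_self]
          rw [this] at h
          exact hc ⟨h ▸ hj, hin ▸ hi⟩
      · rcases Nat.lt_or_ge (j.val + 1) n with hlt | hge
        · rw [Nat.mod_eq_of_lt hlt] at h
          exact hnt j.val hj (h ▸ hi)
        · have hjn : j.val = n - 1 := by omega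
          have : (j.val + 1) % n = 0 := by
            have : j.val + 1 = n := by omega
            rw [this, Nat.mod_self]
          rw [this] at h
          exact hc ⟨h ▸ hi, hjn ▸ hj⟩
    case li =>
      intro t ht
      ext i
      rw [Finset.mem_attachFin, Finset.mem_image]
      constructor
      · rintro ⟨j, hj, hij⟩
        rwa [Fin.ext hij] at hj
      · intro h; exact ⟨i, h, rfl⟩
    case ri =>
      intro s hs
      ext m
      simp only [Finset.mem_image, Finset.mem_attachFin]
      constructor
      · rintro ⟨i, hi, rfl⟩; exact hi
      · intro hm
        have hmn : m < n := Finset.mem_range.mp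
          ((Finset.mem_powerset.mp (Finset.mem_filter.mp hs).1) hm)
        exact ⟨⟨m, hmn⟩, hm, rfl⟩
  rw [key, cycleSets_card n hn]
  have hl := lucas_fib (n - 1)
  rw [show n - 1 + 1 = n by omega, show n - 1 + 2 = n + 1 by omega] at hl
  omega
end

section
/- For n ≥ 4 and any k, the number of independent sets of size k in the type D Coxeter graph Γ_{D_n} equals binomial(n-k, k-2) + 2·binomial(n-k-1, k-1) + binomial(n-k-1, k), which also equals binomial(n-k, k-2) + binomial(n-k-1, k-1) + binomial(n-k, k). -/
/-- The type `Dₙ` Coxeter graph on vertices `0, 1, …, n-1`: a path on the first `n - 1`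
vertices `0, …, n-2`, together with the vertex `n-1` adjacent only to the vertex `n-3`. -/
def typeDGraph (n : ℕ) : SimpleGraph (Fin n) :=
  SimpleGraph.fromRel (fun i j =>
    (i.val + 1 = j.val ∧ j.val ≤ n - 2) ∨ (i.val = n - 3 ∧ j.val = n - 1))

open Finset

def sparseCount (m k : ℕ) : ℕ :=
  (((range m).powersetCard k).filter (fun s => ∀ a ∈ s, a + 1 ∉ s)).card

lemma sparseCount_succ_succ (m k : ℕ) :
    sparseCount (m + 2) (k + 1) = sparseCount (m + 1) (k + 1) + sparseCount m k := by
  unfold sparseCount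
  rw [← Finset.card_filter_add_card_filter_not
    (p := fun s : Finset ℕ => m + 1 ∈ s), add_comm]
  congr 1
  · -- sets not containing m+1
    congr 1
    ext s
    simp only [mem_filter, mem_powersetCard, Finset.subset_iff, mem_range]
    constructor
    · rintro ⟨⟨⟨hsub, hcard⟩, hsp⟩, hnot⟩
      refine ⟨⟨fun a ha => ?_, hcard⟩, hsp⟩
      have h1 := hsub ha
      have h2 : a ≠ m + 1 := fun h => hnot (h ▸ ha)
      omega
    · rintro ⟨⟨hsub, hcard⟩, hsp⟩
      refine ⟨⟨⟨fun a ha => by have := hsub ha; omega, hcard⟩, hsp⟩, fun h => by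
        have := hsub h; omega⟩
  · -- sets containing m+1
    refine Finset.card_bij' (fun s _ => s.erase (m + 1)) (fun s _ => insert (m + 1) s)
      ?_ ?_ ?_ ?_
    · rintro s hs
      simp only [mem_filter, mem_powersetCard, Finset.subset_iff, mem_range] at hs ⊢
      obtain ⟨⟨⟨hsub, hcard⟩, hsp⟩, hmem⟩ := hs
      have hmnot : m ∉ s := fun h => hsp m h hmem
      refine ⟨⟨fun a ha => ?_, ?_⟩, fun a ha => ?_⟩
      · rw [mem_erase] at ha
        have h1 := hsub ha.2
        have h2 : a ≠ m := fun h => hmnot (h ▸ ha.2)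
        omega
      · simp [card_erase_of_mem hmem, hcard]
      · rw [mem_erase] at ha ⊢
        intro hc
        exact hsp a ha.2 hc.2
    · rintro s hs
      simp only [mem_filter, mem_powersetCard, Finset.subset_iff, mem_range, mem_insert] at hs ⊢
      obtain ⟨⟨hsub, hcard⟩, hsp⟩ := hs
      have hnm : m + 1 ∉ s := fun h => by have := hsub h; omega
      refine ⟨⟨⟨fun a ha => ?_, ?_⟩, fun a ha hc => ?_⟩, by simp⟩
      · rcases ha with h | h
        · omega
        · have := hsub h; omega
      · rw [card_insert_of_notMem hnm, hcard]
      · rcases ha with h | h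
        · subst h
          rcases hc with h2 | h2
          · omega
          · have := hsub h2; omega
        · rcases hc with h2 | h2
          · have := hsub h; omega
          · exact hsp a h h2
    · intro s hs
      simp only [mem_filter] at hs
      exact Finset.insert_erase hs.2
    · intro s hs
      simp only [mem_filter, mem_powersetCard, Finset.subset_iff, mem_range] at hs
      have : m + 1 ∉ s := fun h => by have := hs.1.1 h; omega
      exact Finset.erase_insert this

lemma sparseCount_eq : ∀ m k, sparseCount m k = (m + 1 - k).choose k := by
  intro m
  induction m using Nat.strong_induction_on with
  | _ m ih =>
    match m with
    | 0 =>
      intro k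
      match k with
      | 0 => decide
      | k + 1 =>
        unfold sparseCount
        rw [show (1 - (k+1)) = 0 from by omega, Nat.choose_zero_succ]
        rw [show Finset.range 0 = ∅ from rfl,
          Finset.powersetCard_eq_empty.mpr (by simp), Finset.filter_empty, Finset.card_empty]
    | 1 =>
      intro k
      match k with
      | 0 => decide
      | 1 => decide
      | k + 2 =>
        unfold sparseCount
        rw [show (2 - (k+2)) = 0 from by omega, Nat.choose_zero_succ]
        apply Nat.le_zero.mp
        calc _ ≤ ((range 1).powersetCard (k+2)).card := Finset.card_filter_le _ _
        _ = Nat.choose 1 (k+2) := by rw [Finset.card_powersetCard, card_range]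
        _ = 0 := Nat.choose_eq_zero_of_lt (by omega)
    | (m + 2) =>
      intro k
      match k with
      | 0 =>
        unfold sparseCount
        rw [Finset.powersetCard_zero]
        simp [Finset.filter_singleton]
      | k + 1 =>
        rw [sparseCount_succ_succ, ih (m+1) (by omega), ih m (by omega)]
        rcases le_or_gt k (m + 1) with h | h
        · rw [show m + 2 + 1 - (k+1) = (m + 1 - k) + 1 from by omega,
            show m + 1 + 1 - (k + 1) = m + 1 - k from by omega,
            Nat.choose_succ_succ]
          ring
        · rw [show m + 1 + 1 - (k+1) = 0 from by omega, show m + 1 - k = 0 from by omega,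
            show m + 2 + 1 - (k+1) = 0 from by omega, Nat.choose_zero_succ]
          obtain ⟨j, rfl⟩ : ∃ j, k = j + 1 := ⟨k - 1, by omega⟩
          rw [Nat.choose_zero_succ]



def dpred (m : ℕ) (S : Finset ℕ) : Prop :=
  ∀ a ∈ S, ∀ b ∈ S, a ≠ b → ¬((a + 1 = b ∧ b ≤ m + 2) ∨ (a = m + 1 ∧ b = m + 3))

instance (m : ℕ) : DecidablePred (dpred m) := fun S => by unfold dpred; infer_instance

def FD (m k : ℕ) : Finset (Finset ℕ) :=
  ((range (m + 4)).powersetCard k).filter (dpred m)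

lemma mem_FD {m k : ℕ} {S : Finset ℕ} :
    S ∈ FD m k ↔ (∀ a ∈ S, a < m + 4) ∧ S.card = k ∧ dpred m S := by
  simp [FD, mem_filter, mem_powersetCard, Finset.subset_iff, mem_range, and_assoc]

-- case 4 : neither m+2 nor m+3
lemma case4 (m k : ℕ) :
    ((FD m k).filter (fun S => m + 3 ∉ S ∧ m + 2 ∉ S)).card = sparseCount (m + 2) k := by
  unfold sparseCount
  congr 1
  ext S
  simp only [mem_filter, mem_FD, mem_powersetCard, Finset.subset_iff, mem_range]
  constructor
  · rintro ⟨⟨hsub, hcard, hd⟩, h3, h2⟩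
    refine ⟨⟨fun a ha => ?_, hcard⟩, fun a ha hc => ?_⟩
    · have := hsub a ha
      have : a ≠ m + 3 := fun h => h3 (h ▸ ha)
      have : a ≠ m + 2 := fun h => h2 (h ▸ ha)
      omega
    · have h1 := hsub a ha
      have h4 : a ≠ m + 3 := fun h => h3 (h ▸ ha)
      have h5 : a ≠ m + 2 := fun h => h2 (h ▸ ha)
      exact hd a ha (a+1) hc (by omega) (Or.inl ⟨rfl, by omega⟩)
  · rintro ⟨⟨hsub, hcard⟩, hsp⟩
    have hb : ∀ a ∈ S, a < m + 2 := fun a ha => mem_range.mp (by exact mem_range.mpr (hsub ha))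
    refine ⟨⟨fun a ha => by have := hb a ha; omega, hcard, ?_⟩, fun h => by have := hb _ h; omega,
      fun h => by have := hb _ h; omega⟩
    intro a ha b hb' hne hbad
    have h1 := hb a ha
    have h2 := hb b hb'
    rcases hbad with ⟨e1, e2⟩ | ⟨e1, e2⟩
    · exact hsp a ha (e1 ▸ hb')
    · omega

-- case 3 : m+2 in, m+3 not
lemma case3 (m k : ℕ) :
    ((FD m (k + 1)).filter (fun S => m + 3 ∉ S ∧ m + 2 ∈ S)).card = sparseCount (m + 1) k := by
  unfold sparseCount
  refine Finset.card_bij' (fun S _ => S.erase (m + 2)) (fun S _ => insert (m + 2) S) ?_ ?_ ?_ ?_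
  · rintro S hS
    simp only [mem_filter, mem_FD] at hS
    obtain ⟨⟨hsub, hcard, hd⟩, h3, h2⟩ := hS
    have hm1 : m + 1 ∉ S := fun h => hd (m+1) h (m+2) h2 (by omega) (Or.inl ⟨rfl, by omega⟩)
    simp only [mem_filter, mem_powersetCard, Finset.subset_iff, mem_range]
    refine ⟨⟨fun a ha => ?_, ?_⟩, fun a ha hc => ?_⟩
    · rw [mem_erase] at ha
      have := hsub a ha.2
      have : a ≠ m + 3 := fun h => h3 (h ▸ ha.2)
      have : a ≠ m + 1 := fun h => hm1 (h ▸ ha.2)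
      omega
    · rw [card_erase_of_mem h2, hcard]
      omega
    · rw [mem_erase] at ha hc
      have h1 := hsub a ha.2
      have h4 : a ≠ m + 1 := fun h => hm1 (h ▸ ha.2)
      have h5 : a ≠ m + 3 := fun h => h3 (h ▸ ha.2)
      have h6 : a + 1 ≠ m + 3 := fun h => h3 (h ▸ hc.2)
      exact hd a ha.2 (a+1) hc.2 (by omega) (Or.inl ⟨rfl, by omega⟩)
  · rintro S hS
    simp only [mem_filter, mem_powersetCard, Finset.subset_iff, mem_range] at hS
    obtain ⟨⟨hsub, hcard⟩, hsp⟩ := hS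
    have hnm : m + 2 ∉ S := fun h => by have := hsub h; omega
    simp only [mem_filter, mem_FD, mem_insert]
    refine ⟨⟨fun a ha => ?_, ?_, ?_⟩, ?_, by simp⟩
    · rcases ha with rfl | h
      · omega
      · have := hsub h; omega
    · rw [card_insert_of_notMem hnm, hcard]
    · intro a ha b hb hne hbad
      rcases mem_insert.mp ha with rfl | ha' <;> rcases mem_insert.mp hb with rfl | hb' <;>
        [skip; skip; skip; skip]
      · omega
      · have := hsub hb'; omega
      · have := hsub ha'; omega
      · rcases hbad with ⟨e1, e2⟩ | ⟨e1, e2⟩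
        · exact hsp a ha' (e1 ▸ hb')
        · have := hsub hb'; omega
    · intro h
      rcases h with h | h
      · omega
      · have := hsub h; omega
  · intro S hS
    simp only [mem_filter] at hS
    exact Finset.insert_erase hS.2.2
  · intro S hS
    simp only [mem_filter, mem_powersetCard, Finset.subset_iff, mem_range] at hS
    have : m + 2 ∉ S := fun h => by have := hS.1.1 h; omega
    exact Finset.erase_insert this

-- case 2 : m+3 in, m+2 not
lemma case2 (m k : ℕ) :
    ((FD m (k + 1)).filter (fun S => m + 3 ∈ S ∧ m + 2 ∉ S)).card = sparseCount (m + 1) k := by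
  unfold sparseCount
  refine Finset.card_bij' (fun S _ => S.erase (m + 3)) (fun S _ => insert (m + 3) S) ?_ ?_ ?_ ?_
  · rintro S hS
    simp only [mem_filter, mem_FD] at hS
    obtain ⟨⟨hsub, hcard, hd⟩, h3, h2⟩ := hS
    have hm1 : m + 1 ∉ S := fun h => hd (m+1) h (m+3) h3 (by omega) (Or.inr ⟨rfl, rfl⟩)
    simp only [mem_filter, mem_powersetCard, Finset.subset_iff, mem_range]
    refine ⟨⟨fun a ha => ?_, ?_⟩, fun a ha hc => ?_⟩
    · rw [mem_erase] at ha
      have := hsub a ha.2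
      have : a ≠ m + 2 := fun h => h2 (h ▸ ha.2)
      have : a ≠ m + 1 := fun h => hm1 (h ▸ ha.2)
      omega
    · rw [card_erase_of_mem h3, hcard]
      omega
    · rw [mem_erase] at ha hc
      have h1 := hsub a ha.2
      have h4 : a ≠ m + 1 := fun h => hm1 (h ▸ ha.2)
      have h5 : a ≠ m + 2 := fun h => h2 (h ▸ ha.2)
      have h6 : a ≠ m + 3 := ha.1
      exact hd a ha.2 (a+1) hc.2 (by omega) (Or.inl ⟨rfl, by omega⟩)
  · rintro S hS
    simp only [mem_filter, mem_powersetCard, Finset.subset_iff, mem_range] at hS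
    obtain ⟨⟨hsub, hcard⟩, hsp⟩ := hS
    have hnm : m + 3 ∉ S := fun h => by have := hsub h; omega
    simp only [mem_filter, mem_FD, mem_insert]
    refine ⟨⟨fun a ha => ?_, ?_, ?_⟩, by simp, ?_⟩
    · rcases ha with rfl | h
      · omega
      · have := hsub h; omega
    · rw [card_insert_of_notMem hnm, hcard]
    · intro a ha b hb hne hbad
      rcases mem_insert.mp ha with rfl | ha' <;> rcases mem_insert.mp hb with rfl | hb' <;>
        [skip; skip; skip; skip]
      · omega
      · have := hsub hb'; omega
      · have := hsub ha'; omega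
      · rcases hbad with ⟨e1, e2⟩ | ⟨e1, e2⟩
        · exact hsp a ha' (e1 ▸ hb')
        · have := hsub hb'; omega
    · intro h
      rcases h with h | h
      · omega
      · have := hsub h; omega
  · intro S hS
    simp only [mem_filter] at hS
    exact Finset.insert_erase hS.2.1
  · intro S hS
    simp only [mem_filter, mem_powersetCard, Finset.subset_iff, mem_range] at hS
    have : m + 3 ∉ S := fun h => by have := hS.1.1 h; omega
    exact Finset.erase_insert this

-- case 1 : both in
lemma case1 (m k : ℕ) :
    ((FD m (k + 2)).filter (fun S => m + 3 ∈ S ∧ m + 2 ∈ S)).card = sparseCount (m + 1) k := by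
  unfold sparseCount
  refine Finset.card_bij' (fun S _ => (S.erase (m + 3)).erase (m + 2))
    (fun S _ => insert (m + 2) (insert (m + 3) S)) ?_ ?_ ?_ ?_
  · rintro S hS
    simp only [mem_filter, mem_FD] at hS
    obtain ⟨⟨hsub, hcard, hd⟩, h3, h2⟩ := hS
    have hm1 : m + 1 ∉ S := fun h => hd (m+1) h (m+3) h3 (by omega) (Or.inr ⟨rfl, rfl⟩)
    simp only [mem_filter, mem_powersetCard, Finset.subset_iff, mem_range, mem_erase]
    refine ⟨⟨fun a ha => ?_, ?_⟩, fun a ha hc => ?_⟩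
    · obtain ⟨hne2, hne3, haS⟩ := ha
      have := hsub a haS
      have : a ≠ m + 1 := fun h => hm1 (h ▸ haS)
      omega
    · rw [card_erase_of_mem (mem_erase.mpr ⟨by omega, h2⟩), card_erase_of_mem h3, hcard]
      omega
    · obtain ⟨hne2, hne3, haS⟩ := ha
      obtain ⟨hc2, hc3, hcS⟩ := hc
      have h1 := hsub a haS
      have : a ≠ m + 1 := fun h => hm1 (h ▸ haS)
      exact hd a haS (a+1) hcS (by omega) (Or.inl ⟨rfl, by omega⟩)
  · rintro S hS
    simp only [mem_filter, mem_powersetCard, Finset.subset_iff, mem_range] at hS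
    obtain ⟨⟨hsub, hcard⟩, hsp⟩ := hS
    have hn3 : m + 3 ∉ S := fun h => by have := hsub h; omega
    have hn2 : m + 2 ∉ insert (m+3) S := by
      simp only [mem_insert]
      rintro (h | h)
      · omega
      · have := hsub h; omega
    simp only [mem_filter, mem_FD]
    refine ⟨⟨fun a ha => ?_, ?_, ?_⟩, by simp, by simp⟩
    · simp only [mem_insert] at ha
      rcases ha with rfl | rfl | h
      · omega
      · omega
      · have := hsub h; omega
    · rw [card_insert_of_notMem hn2, card_insert_of_notMem hn3, hcard]
    · intro a ha b hb hne hbad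
      simp only [mem_insert] at ha hb
      rcases ha with rfl | rfl | ha' <;> rcases hb with rfl | rfl | hb' <;>
        first
          | omega
          | (have := hsub hb'; omega)
          | (have := hsub ha'; omega)
          | (rcases hbad with ⟨e1, e2⟩ | ⟨e1, e2⟩
             · exact hsp a ha' (e1 ▸ hb')
             · have := hsub hb'; omega)
  · intro S hS
    simp only [mem_filter, mem_FD] at hS
    obtain ⟨⟨hsub, hcard, hd⟩, h3, h2⟩ := hS
    show insert (m+2) (insert (m+3) ((S.erase (m+3)).erase (m+2))) = S
    rw [Finset.erase_right_comm,
      Finset.insert_erase (mem_erase.mpr ⟨by omega, h3⟩), Finset.insert_erase h2]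
  · intro S hS
    simp only [mem_filter, mem_powersetCard, Finset.subset_iff, mem_range] at hS
    obtain ⟨⟨hsub, hcard⟩, hsp⟩ := hS
    have hn3 : m + 3 ∉ S := fun h => by have := hsub h; omega
    have hn2 : m + 2 ∉ S := fun h => by have := hsub h; omega
    show ((insert (m+2) (insert (m+3) S)).erase (m+3)).erase (m+2) = S
    rw [Finset.insert_comm,
      Finset.erase_insert (by simp only [mem_insert, not_or]; exact ⟨by omega, hn3⟩),
      Finset.erase_insert hn2]




lemma main_bij (m k : ℕ) :
    Nat.card {t : Finset (Fin (m+4)) //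
        t.card = k ∧ ∀ i ∈ t, ∀ j ∈ t, ¬ (typeDGraph (m+4)).Adj i j} = (FD m k).card := by
  classical
  rw [Nat.card_eq_fintype_card, Fintype.card_subtype]
  refine Finset.card_bij' (fun t _ => t.image Fin.val)
    (fun S hS => S.attachFin (fun a ha => (mem_FD.mp hS).1 a ha)) ?_ ?_ ?_ ?_
  · intro t ht
    simp only [mem_filter, mem_univ, true_and] at ht
    obtain ⟨hcard, hind⟩ := ht
    rw [mem_FD]
    refine ⟨?_, ?_, ?_⟩
    · intro a ha
      obtain ⟨i, hi, rfl⟩ := mem_image.mp ha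
      exact i.isLt
    · rw [Finset.card_image_of_injective _ Fin.val_injective, hcard]
    · intro a ha b hb hne hbad
      obtain ⟨i, hi, rfl⟩ := mem_image.mp ha
      obtain ⟨j, hj, rfl⟩ := mem_image.mp hb
      apply hind i hi j hj
      rw [typeDGraph, SimpleGraph.fromRel_adj]
      refine ⟨fun h => hne (by rw [h]), Or.inl ?_⟩
      rcases hbad with ⟨e1, e2⟩ | ⟨e1, e2⟩
      · exact Or.inl ⟨e1, by omega⟩
      · exact Or.inr ⟨by omega, by omega⟩
  · intro S hS
    have hFD := mem_FD.mp hS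
    simp only [mem_filter, mem_univ, true_and]
    constructor
    · rw [Finset.card_attachFin, hFD.2.1]
    · intro i hi j hj hadj
      rw [Finset.mem_attachFin] at hi hj
      rw [typeDGraph, SimpleGraph.fromRel_adj] at hadj
      obtain ⟨hne, hr⟩ := hadj
      have hne' : (i:ℕ) ≠ (j:ℕ) := fun h => hne (Fin.val_injective h)
      rcases hr with h | h
      · exact hFD.2.2 i hi j hj hne'
          (by rcases h with ⟨e1, e2⟩ | ⟨e1, e2⟩
              exacts [Or.inl ⟨e1, by omega⟩, Or.inr ⟨by omega, by omega⟩])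
      · exact hFD.2.2 j hj i hi (Ne.symm hne')
          (by rcases h with ⟨e1, e2⟩ | ⟨e1, e2⟩
              exacts [Or.inl ⟨e1, by omega⟩, Or.inr ⟨by omega, by omega⟩])
  · intro t ht
    ext i
    rw [Finset.mem_attachFin, Finset.mem_image]
    constructor
    · rintro ⟨x, hx, he⟩
      rwa [Fin.val_injective he] at hx
    · exact fun h => ⟨i, h, rfl⟩
  · intro S hS
    ext a
    rw [Finset.mem_image]
    constructor
    · rintro ⟨x, hx, rfl⟩
      rwa [Finset.mem_attachFin] at hx
    · intro ha
      exact ⟨⟨a, (mem_FD.mp hS).1 a ha⟩, (Finset.mem_attachFin _).mpr ha, rfl⟩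

lemma count_FD (m k : ℕ) :
    (FD m k).card =
      (if 2 ≤ k then (m + 4 - k).choose (k - 2) else 0)
        + 2 * (if 1 ≤ k then (m + 4 - k - 1).choose (k - 1) else 0)
        + (m + 4 - k - 1).choose k := by
  classical
  have e0 := Finset.card_filter_add_card_filter_not
    (s := FD m k) (p := fun S => m + 3 ∈ S)
  have e1 := Finset.card_filter_add_card_filter_not
    (s := (FD m k).filter (fun S => m + 3 ∈ S)) (p := fun S => m + 2 ∈ S)
  have e2 := Finset.card_filter_add_card_filter_not
    (s := (FD m k).filter (fun S => ¬ m + 3 ∈ S)) (p := fun S => m + 2 ∈ S)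
  rw [Finset.filter_filter, Finset.filter_filter] at e1 e2
  have hp1 : ((FD m k).filter (fun S => m + 3 ∈ S ∧ m + 2 ∈ S)).card
      = if 2 ≤ k then (m + 4 - k).choose (k - 2) else 0 := by
    rcases le_or_gt 2 k with h | h
    · obtain ⟨k', rfl⟩ : ∃ k', k = k' + 2 := ⟨k - 2, by omega⟩
      rw [if_pos h, case1, sparseCount_eq]
      congr 1 <;> omega
    · rw [if_neg (by omega), Finset.card_eq_zero, Finset.eq_empty_iff_forall_notMem]
      rintro S hS
      rw [Finset.mem_filter, mem_FD] at hS
      obtain ⟨⟨_, hcard, _⟩, h3, h2⟩ := hS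
      have hsub : ({m + 3, m + 2} : Finset ℕ) ⊆ S := by
        intro x hx
        rcases Finset.mem_insert.mp hx with rfl | hx
        · exact h3
        · rwa [Finset.mem_singleton.mp hx]
      have := Finset.card_le_card hsub
      rw [Finset.card_insert_of_notMem (by simp), Finset.card_singleton] at this
      omega
  have hp2 : ((FD m k).filter (fun S => m + 3 ∈ S ∧ ¬ m + 2 ∈ S)).card
      = if 1 ≤ k then (m + 4 - k - 1).choose (k - 1) else 0 := by
    rcases le_or_gt 1 k with h | h
    · obtain ⟨k', rfl⟩ : ∃ k', k = k' + 1 := ⟨k - 1, by omega⟩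
      rw [if_pos h, case2, sparseCount_eq]
      congr 1 <;> omega
    · rw [if_neg (by omega), Finset.card_eq_zero, Finset.eq_empty_iff_forall_notMem]
      rintro S hS
      rw [Finset.mem_filter, mem_FD] at hS
      obtain ⟨⟨_, hcard, _⟩, h3, h2⟩ := hS
      have : S.Nonempty := ⟨m + 3, h3⟩
      have := Finset.card_pos.mpr this
      omega
  have hp3 : ((FD m k).filter (fun S => ¬ m + 3 ∈ S ∧ m + 2 ∈ S)).card
      = if 1 ≤ k then (m + 4 - k - 1).choose (k - 1) else 0 := by
    rcases le_or_gt 1 k with h | h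
    · obtain ⟨k', rfl⟩ : ∃ k', k = k' + 1 := ⟨k - 1, by omega⟩
      rw [if_pos h, case3, sparseCount_eq]
      congr 1 <;> omega
    · rw [if_neg (by omega), Finset.card_eq_zero, Finset.eq_empty_iff_forall_notMem]
      rintro S hS
      rw [Finset.mem_filter, mem_FD] at hS
      obtain ⟨⟨_, hcard, _⟩, h3, h2⟩ := hS
      have : S.Nonempty := ⟨m + 2, h2⟩
      have := Finset.card_pos.mpr this
      omega
  have hp4 : ((FD m k).filter (fun S => ¬ m + 3 ∈ S ∧ ¬ m + 2 ∈ S)).card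
      = (m + 4 - k - 1).choose k := by
    rw [case4, sparseCount_eq, show m + 2 + 1 - k = m + 4 - k - 1 from by omega]
  omega


/-- For `n ≥ 4` and any `k`, the number of independent sets of size `k`
of the type `Dₙ` Coxeter graph equals `C(n-k, k-2) + 2·C(n-k-1, k-1) + C(n-k-1, k)`,
which also equals `C(n-k, k-2) + C(n-k-1, k-1) + C(n-k, k)`.  (Binomial coefficients with
a negative lower index are `0`; the `if` guards implement this convention.) -/
theorem numIndepSets_typeDGraph (n k : ℕ) (hn : 4 ≤ n) :
    Nat.card {t : Finset (Fin n) //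
        t.card = k ∧ ∀ i ∈ t, ∀ j ∈ t, ¬ (typeDGraph n).Adj i j} =
      (if 2 ≤ k then Nat.choose (n - k) (k - 2) else 0)
        + 2 * (if 1 ≤ k then Nat.choose (n - k - 1) (k - 1) else 0)
        + Nat.choose (n - k - 1) k ∧
    Nat.card {t : Finset (Fin n) //
        t.card = k ∧ ∀ i ∈ t, ∀ j ∈ t, ¬ (typeDGraph n).Adj i j} =
      (if 2 ≤ k then Nat.choose (n - k) (k - 2) else 0)
        + (if 1 ≤ k then Nat.choose (n - k - 1) (k - 1) else 0)
        + Nat.choose (n - k) k := by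
  obtain ⟨m, rfl⟩ : ∃ m, n = m + 4 := ⟨n - 4, by omega⟩
  have h1 := main_bij m k
  have h2 := count_FD m k
  have key : (if 1 ≤ k then (m + 4 - k - 1).choose (k - 1) else 0) + (m + 4 - k - 1).choose k
      = (m + 4 - k).choose k := by
    rcases Nat.eq_zero_or_pos k with rfl | hk
    · simp
    · rw [if_pos (show 1 ≤ k by omega)]
      obtain ⟨j, rfl⟩ : ∃ j, k = j + 1 := ⟨k - 1, by omega⟩
      rcases le_or_gt (j + 1) (m + 3) with h | h
      · generalize hA : m + 4 - (j + 1) - 1 = A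
        rw [show m + 4 - (j + 1) = A + 1 from by omega,
          show j + 1 - 1 = j from by omega]
        exact (Nat.choose_succ_succ _ _).symm
      · rw [show m + 4 - (j + 1) - 1 = 0 from by omega,
          show m + 4 - (j + 1) = 0 from by omega]
        obtain ⟨i, rfl⟩ : ∃ i, j = i + 1 := ⟨j - 1, by omega⟩
        rw [show i + 1 + 1 - 1 = i + 1 from by omega]
        simp [Nat.choose_zero_succ]
  constructor
  · rw [h1, h2]
  · rw [h1, h2]
    omega
end

section
/- In a Coxeter group W with Coxeter system (W, S), if the interval [v, w] in the right weak order is a Boolean interval, then supp(v⁻¹w) ∩ Des(v) = ∅, where supp(u) is the set of generators appearing in some (equivalently, any) reduced word for u. -/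
/-!
Walk from `v` up to `w` along a reduced word `ω` for `v⁻¹w`. At a step `x ⋖ x s_a`, the
Boolean structure of `[v, w]` provides an atom `v s_j` lying below `x s_a` but not below `x`,
and the lifting property turns this into `s_j p = p s_a`, where `x = v p`. Hence every prefix
product of `ω` has a word all of whose letters `j` satisfy `v < v s_j`. A reduced word only
uses simple reflections that occur in every word for the same element (a consequence of the
strong exchange property, which comes from Tits' permutation representation), so no letter
of `ω` is a right descent of `v`.
-/

/-- The right weak order on a Coxeter group: `u ≤ w` iff `ℓ(u) + ℓ(u⁻¹w) = ℓ(w)`. -/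
def weakLE {B W : Type*} [Group W] {M : CoxeterMatrix B} (cs : CoxeterSystem M W)
    (u w : W) : Prop :=
  cs.length u + cs.length (u⁻¹ * w) = cs.length w

/-- The interval `[v, w]` in the right weak order is Boolean of rank `k`: it is order
isomorphic to the lattice of subsets of a `k`-element set, ordered by inclusion. -/
def IsBooleanInterval {B W : Type*} [Group W] {M : CoxeterMatrix B} (cs : CoxeterSystem M W)
    (k : ℕ) (v w : W) : Prop :=
  weakLE cs v w ∧
    ∃ f : {x : W // weakLE cs v x ∧ weakLE cs x w} ≃ Finset (Fin k),
      ∀ a b, weakLE cs a.1 b.1 ↔ f a ⊆ f b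

open List

namespace CoxeterSystem

variable {B W : Type*} [Group W] {M : CoxeterMatrix B} (cs : CoxeterSystem M W)

local prefix:100 "s " => cs.simple
local prefix:100 "π " => cs.wordProd
local prefix:100 "ℓ " => cs.length
local prefix:100 "ris " => cs.rightInvSeq

section ReflectionRepresentation

open scoped Classical

theorem simple_mul_mul_simple_eq_iff (i : B) (x y : W) :
    s i * x * s i = y ↔ x = s i * y * s i := by
  constructor <;> rintro rfl <;> simp [mul_assoc]

noncomputable def reflPerm (i : B) : Equiv.Perm (W × ZMod 2) :=
  Function.Involutive.toPerm (fun p => (s i * p.1 * s i, p.2 + if p.1 = s i then 1 else 0)) <| by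
    rintro ⟨t, ε⟩
    simp only [Prod.mk.injEq, simple_mul_mul_simple_eq_iff, simple_mul_simple_cancel_right]
    refine ⟨trivial, ?_⟩
    split_ifs <;> simp [add_assoc, CharTwo.add_self_eq_zero]

theorem reflPerm_apply (i : B) (t : W) (ε : ZMod 2) :
    cs.reflPerm i (t, ε) = (s i * t * s i, ε + if t = s i then 1 else 0) :=
  rfl

theorem reflPerm_mul_pow (i j : B) (n : ℕ) (t : W) (ε : ZMod 2) :
    ((cs.reflPerm i * cs.reflPerm j) ^ n) (t, ε) =
      ((s i * s j) ^ n * t * (s j * s i) ^ n,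
        ε + ∑ r ∈ Finset.range (2 * n), if t = (s j * s i) ^ r * s j then 1 else 0) := by
  set q := s j * s i
  induction n generalizing t ε with
  | zero => simp
  | succ n ih =>
    have hq : ∀ r : ℕ, s i * (s j * t * s j) * s i = q ^ r * s j ↔ t = q ^ (r + 2) * s j := by
      intro r
      rw [simple_mul_mul_simple_eq_iff, simple_mul_mul_simple_eq_iff, pow_succ, pow_succ' q r]
      simp only [q, mul_assoc]
    rw [pow_succ, Equiv.Perm.mul_apply, Equiv.Perm.mul_apply, reflPerm_apply, reflPerm_apply, ih,
      Prod.mk.injEq]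
    constructor
    · rw [pow_succ, pow_succ' q]; simp only [q, mul_assoc]
    · simp only [hq, Nat.mul_succ, Finset.sum_range_succ' _ (2 * n + 1),
        Finset.sum_range_succ' _ (2 * n)]
      have h1 : s j * t * s j = s i ↔ t = q * s j := by
        rw [simple_mul_mul_simple_eq_iff, mul_assoc]
      simp only [h1, zero_add, pow_zero, pow_one, one_mul]
      abel

theorem isLiftable_reflPerm : M.IsLiftable cs.reflPerm := by
  intro i j
  ext ⟨t, ε⟩ : 1
  have hq : (s j * s i) ^ M i j = 1 := by simp
  have hsum : ∑ r ∈ Finset.range (2 * M i j),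
      (if t = (s j * s i) ^ r * s j then 1 else 0 : ZMod 2) = 0 := by
    rw [two_mul, Finset.sum_range_add]
    simp only [pow_add, hq, one_mul, CharTwo.add_self_eq_zero]
  rw [reflPerm_mul_pow, hsum]
  simp [hq]

/-- Tits' permutation representation. -/
noncomputable def reflRep : W →* Equiv.Perm (W × ZMod 2) :=
  cs.lift ⟨cs.reflPerm, cs.isLiftable_reflPerm⟩

theorem reflRep_simple (i : B) : cs.reflRep (s i) = cs.reflPerm i :=
  cs.lift_apply_simple cs.isLiftable_reflPerm i

theorem reflRep_wordProd (ω : List B) (t : W) (ε : ZMod 2) :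
    cs.reflRep (π ω) (t, ε) = (π ω * t * (π ω)⁻¹, ε + (ris ω).count t) := by
  induction ω generalizing ε with
  | nil => simp
  | cons i ω ih =>
    have hconj : π ω * t * (π ω)⁻¹ = s i ↔ (π ω)⁻¹ * s i * π ω = t := by
      constructor
      · rintro h; simp [← h, mul_assoc]
      · rintro rfl; simp [mul_assoc]
    rw [wordProd_cons, map_mul, Equiv.Perm.mul_apply, ih, reflRep_simple, reflPerm_apply, hconj]
    simp [rightInvSeq, count_cons, mul_assoc, add_assoc]

theorem reflRep_apply (w t : W) (ε : ZMod 2) :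
    cs.reflRep w (t, ε) = (w * t * w⁻¹, ε + (cs.reflRep w (t, 0)).2) := by
  obtain ⟨ω, rfl⟩ := cs.wordProd_surjective w
  simp [reflRep_wordProd]

theorem reflRep_self {t : W} (ht : cs.IsReflection t) : cs.reflRep t (t, 0) = (t, 1) := by
  obtain ⟨g, c, rfl⟩ := ht
  obtain ⟨e, he⟩ : ∃ e, cs.reflRep g⁻¹ (g * s c * g⁻¹, 0) = (s c, e) :=
    ⟨_, (cs.reflRep_apply _ _ _).trans (Prod.ext (by simp [mul_assoc]) rfl)⟩
  have hg : cs.reflRep g (s c, e) = (g * s c * g⁻¹, 0) := by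
    rw [← he, ← Equiv.Perm.mul_apply, ← map_mul, mul_inv_cancel, map_one, Equiv.Perm.one_apply]
  rw [map_mul, map_mul, Equiv.Perm.mul_apply, Equiv.Perm.mul_apply, he, reflRep_simple,
    reflPerm_apply, if_pos rfl, simple_mul_simple_cancel_right, reflRep_apply]
  rw [reflRep_apply] at hg
  simp only [Prod.mk.injEq] at hg ⊢
  exact ⟨hg.1, by linear_combination hg.2⟩

/-- The strong exchange property. -/
theorem mem_rightInvSeq_of_isRightInversion {ω : List B} {t : W}
    (ht : cs.IsRightInversion (π ω) t) : t ∈ ris ω := by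
  by_contra hmem
  obtain ⟨ω', hω', hω't⟩ := cs.exists_isReduced (π ω * t)
  have hodd : cs.reflRep (π ω') (t, 0) = (π ω' * t * (π ω')⁻¹, 1) := by
    rw [← hω't, map_mul, Equiv.Perm.mul_apply, reflRep_self cs ht.1, reflRep_wordProd,
      count_eq_zero.mpr hmem]
    simp
  rw [reflRep_wordProd, Prod.mk.injEq, zero_add] at hodd
  have hmem' : t ∈ ris ω' := count_pos_iff.mp <| Nat.pos_of_ne_zero fun h => by simp [h] at hodd
  have := (cs.isRightInversion_of_mem_rightInvSeq hω' hmem').2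
  rw [← hω't, mul_assoc, ht.1.mul_self, mul_one] at this
  exact lt_asymm this ht.2

end ReflectionRepresentation

theorem exists_wordProd_mul_simple_eq_eraseIdx {ω : List B} {a : B}
    (h : cs.IsRightDescent (π ω) a) : ∃ l < ω.length, π ω * s a = π (ω.eraseIdx l) := by
  have hmem := cs.mem_rightInvSeq_of_isRightInversion
    ((cs.isRightInversion_simple_iff_isRightDescent _ a).mpr h)
  obtain ⟨l, hl, hget⟩ := List.mem_iff_getElem.mp hmem
  rw [length_rightInvSeq] at hl
  refine ⟨l, hl, ?_⟩
  rw [← hget, ← getD_eq_getElem _ 1, wordProd_mul_getD_rightInvSeq]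

/-- The deletion property. -/
theorem exists_isReduced_sublist (ω : List B) :
    ∃ ρ, ρ <+ ω ∧ cs.IsReduced ρ ∧ π ρ = π ω := by
  induction ω using List.reverseRecOn with
  | nil => exact ⟨[], Sublist.refl _, by simp [IsReduced], rfl⟩
  | append_singleton ω a ih =>
    obtain ⟨ρ, hρω, hρ, hπ⟩ := ih
    rcases cs.length_mul_simple (π ρ) a with hlen | hlen
    · refine ⟨ρ ++ [a], hρω.append (Sublist.refl _), ?_,
        by rw [wordProd_append, hπ, wordProd_append]⟩
      simp [IsReduced, wordProd_append, hlen, hρ.eq]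
    · obtain ⟨l, hl, hρa⟩ := cs.exists_wordProd_mul_simple_eq_eraseIdx (ω := ρ) (a := a)
        (by unfold IsRightDescent; omega)
      refine ⟨ρ.eraseIdx l, ((eraseIdx_sublist ρ l).trans hρω).trans (sublist_append_left ω [a]),
        ?_, by simp [← hρa, hπ, wordProd_append]⟩
      simp only [IsReduced, ← hρa, length_eraseIdx, hl, ↓reduceIte]
      have := hρ.eq
      omega

theorem simple_mem_map_of_wordProd_eq {ω : List B} {a : B} (h : π ω = s a) :
    s a ∈ ω.map cs.simple := by
  obtain ⟨ρ, hρω, hρ, hπ⟩ := cs.exists_isReduced_sublist ω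
  obtain ⟨c, rfl⟩ : ∃ c, ρ = [c] := by
    rw [← List.length_eq_one_iff, ← hρ.eq, hπ, h, length_simple]
  simp only [wordProd_singleton, h] at hπ
  exact hπ ▸ mem_map_of_mem (hρω.subset (mem_singleton_self c))

theorem exists_wordProd_eq_of_mem_rightInvSeq {ω : List B} {t : W} (ht : t ∈ ris ω) :
    ∃ ζ ⊆ ω, π ζ = t := by
  induction ω with
  | nil => simp at ht
  | cons i ω ih =>
    rcases mem_cons.mp ht with rfl | ht
    · refine ⟨ω.reverse ++ i :: ω, fun b => by simp; tauto,
        by simp [wordProd_append, wordProd_cons, mul_assoc]⟩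
    · obtain ⟨ζ, hζ, rfl⟩ := ih ht
      exact ⟨ζ, Subset.trans hζ (subset_cons_self i ω), rfl⟩

theorem simple_mem_map_of_isRightDescent {ω : List B} {a : B}
    (h : cs.IsRightDescent (π ω) a) : s a ∈ ω.map cs.simple := by
  obtain ⟨ζ, hζ, hπ⟩ := cs.exists_wordProd_eq_of_mem_rightInvSeq
    (cs.mem_rightInvSeq_of_isRightInversion
      ((cs.isRightInversion_simple_iff_isRightDescent _ a).mpr h))
  exact map_subset _ hζ (cs.simple_mem_map_of_wordProd_eq hπ)

/-- The lifting property. -/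
theorem simple_mul_eq_mul_simple {p : W} {a j : B} (h1 : ℓ (p * s a) = ℓ p + 1)
    (h2 : ℓ (s j * p) = ℓ p + 1) (h3 : ℓ (s j * p * s a) = ℓ p) : s j * p = p * s a := by
  obtain ⟨δ, hδ, rfl⟩ := cs.exists_isReduced p
  obtain ⟨l, hl, hexch⟩ := cs.exists_wordProd_mul_simple_eq_eraseIdx (ω := j :: δ) (a := a)
    (by simp only [IsRightDescent, wordProd_cons]; omega)
  cases l with
  | zero =>
    rw [eraseIdx_cons_zero, wordProd_cons] at hexch
    simpa using congrArg (· * s a) hexch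
  | succ l =>
    rw [eraseIdx_cons_succ, wordProd_cons, wordProd_cons, mul_assoc, mul_right_inj] at hexch
    have := cs.length_wordProd_le (δ.eraseIdx l)
    rw [← hexch, h1, length_eraseIdx, hδ.eq] at this
    simp only [length_cons] at hl
    split_ifs at this <;> omega

variable {cs}

theorem IsReduced.map_simple_subset {ω : List B} (hω : cs.IsReduced ω) {ω' : List B}
    (h : π ω = π ω') : ω.map cs.simple ⊆ ω'.map cs.simple := by
  induction ω using List.reverseRecOn generalizing ω' with
  | nil => simp
  | append_singleton ω a ih =>
    have hdesc : cs.IsRightDescent (π ω') a := by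
      have hred := hω.eq
      have := cs.length_wordProd_le ω
      rw [wordProd_append, wordProd_singleton, length_append, length_singleton] at hred
      rw [IsRightDescent, ← h, wordProd_append, wordProd_singleton, simple_mul_simple_cancel_right,
        hred]
      omega
    obtain ⟨l, -, hl⟩ := cs.exists_wordProd_mul_simple_eq_eraseIdx hdesc
    have hω₀ : cs.IsReduced ω := by simpa using hω.take ω.length
    have := ih hω₀ (ω' := ω'.eraseIdx l) (by simp [← hl, ← h, wordProd_append])
    simp only [map_append, map_singleton, append_subset, cons_subset, nil_subset, and_true]
    exact ⟨Subset.trans this (map_subset _ (eraseIdx_sublist ω' l).subset),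
      cs.simple_mem_map_of_isRightDescent hdesc⟩

end CoxeterSystem

section WeakOrder

open CoxeterSystem

variable {B W : Type*} [Group W] {M : CoxeterMatrix B} {cs : CoxeterSystem M W}

local prefix:100 "s " => cs.simple
local prefix:100 "π " => cs.wordProd
local prefix:100 "ℓ " => cs.length

theorem weakLE_self_mul_iff {x y : W} : weakLE cs x (x * y) ↔ ℓ x + ℓ y = ℓ (x * y) := by
  simp [weakLE]

theorem weakLE_mul_simple_iff_not_isRightDescent {v : W} {i : B} :
    weakLE cs v (v * s i) ↔ ¬ cs.IsRightDescent v i := by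
  rw [weakLE_self_mul_iff, length_simple, IsRightDescent]
  rcases cs.length_mul_simple v i with h | h <;> omega

theorem weakLE_trans {x y z : W} (hxy : weakLE cs x y) (hyz : weakLE cs y z) :
    weakLE cs x z := by
  have h1 := cs.length_mul_le (x⁻¹ * y) (y⁻¹ * z)
  have h2 := cs.length_mul_le x (x⁻¹ * z)
  simp only [mul_assoc, mul_inv_cancel_left, weakLE] at *
  omega

theorem exists_weakLE_mul_simple_weakLE {v y : W} (hvy : weakLE cs v y) (hne : v ≠ y) :
    ∃ j, weakLE cs v (v * s j) ∧ weakLE cs (v * s j) y := by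
  set d := v⁻¹ * y
  obtain ⟨j, hj⟩ := cs.exists_leftDescent_of_ne_one (w := d) (by simpa [d, inv_mul_eq_one])
  have hd : ℓ (s j * d) + 1 = ℓ d :=
    (cs.length_simple_mul d j).resolve_left (by unfold IsLeftDescent at hj; omega)
  have h1 : ℓ y ≤ ℓ (v * s j) + ℓ (s j * d) := by
    simpa [d, mul_assoc] using cs.length_mul_le (v * s j) (s j * d)
  have h2 : ℓ (v * s j) ≤ ℓ v + 1 := by simpa using cs.length_mul_le v (s j)
  have hvy' : ℓ v + ℓ d = ℓ y := hvy
  refine ⟨j, ?_, ?_⟩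
  · rw [weakLE_self_mul_iff, length_simple]
    omega
  · show ℓ (v * s j) + ℓ ((v * s j)⁻¹ * y) = ℓ y
    rw [show (v * s j)⁻¹ * y = s j * d by simp [d, mul_assoc]]
    omega

theorem simple_mul_eq_mul_simple_of_weakLE {v p : W} {a j : B} (hvj : weakLE cs v (v * s j))
    (hvp : weakLE cs v (v * p)) (hpa : weakLE cs (v * p) (v * p * s a))
    (hle : weakLE cs (v * s j) (v * p * s a)) (hnle : ¬ weakLE cs (v * s j) (v * p)) :
    s j * p = p * s a := by
  rw [weakLE_self_mul_iff, length_simple] at hvj hpa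
  rw [weakLE_self_mul_iff] at hvp
  have hle' : ℓ (v * s j) + ℓ (s j * p * s a) = ℓ (v * p * s a) := by
    simpa [weakLE, mul_assoc] using hle
  have hnle' : ℓ (v * s j) + ℓ (s j * p) ≠ ℓ (v * p) := by
    simpa [weakLE, mul_assoc] using hnle
  have hpa' : ℓ (v * p * s a) ≤ ℓ v + ℓ (p * s a) := by
    simpa [mul_assoc] using cs.length_mul_le v (p * s a)
  apply cs.simple_mul_eq_mul_simple
  · rcases cs.length_mul_simple p a with h | h <;> omega
  · rcases cs.length_simple_mul p j with h | h <;> omega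
  · omega

theorem IsBooleanInterval.exists_mul_simple_weakLE_not_weakLE {k : ℕ} {v w x y : W}
    (h : IsBooleanInterval cs k v w) (hvx : weakLE cs v x) (hxy : weakLE cs x y)
    (hyw : weakLE cs y w) (hne : x ≠ y) :
    ∃ j, weakLE cs v (v * s j) ∧ weakLE cs (v * s j) y ∧ ¬ weakLE cs (v * s j) x := by
  obtain ⟨hvw, f, hf⟩ := h
  let V : {z // weakLE cs v z ∧ weakLE cs z w} := ⟨v, by simp [weakLE], hvw⟩
  let X : {z // weakLE cs v z ∧ weakLE cs z w} := ⟨x, hvx, weakLE_trans hxy hyw⟩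
  let Y : {z // weakLE cs v z ∧ weakLE cs z w} := ⟨y, weakLE_trans hvx hxy, hyw⟩
  have hfV : f V = ∅ := Finset.subset_empty.mp <| by
    simpa using (hf V (f.symm ∅)).mp (f.symm ∅).2.1
  obtain ⟨c, hcY, hcX⟩ := Finset.exists_of_ssubset <|
    ((hf X Y).mp hxy).ssubset_of_ne fun h => hne (congrArg Subtype.val (f.injective h))
  let A := f.symm {c}
  have hvA : v ≠ A.1 := fun h => by
    simpa [A, hfV] using congrArg f (Subtype.ext h.symm : A = V)
  obtain ⟨j, hvj, hjA⟩ := exists_weakLE_mul_simple_weakLE A.2.1 hvA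
  let Z : {z // weakLE cs v z ∧ weakLE cs z w} := ⟨v * s j, hvj, weakLE_trans hjA A.2.2⟩
  have hfZ : f Z = {c} := by
    refine (Finset.subset_singleton_iff.mp (by simpa [A] using (hf Z A).mp hjA)).resolve_left
      fun h0 => cs.length_mul_simple_ne v j ?_
    rw [show v * s j = v from congrArg Subtype.val (f.injective (h0.trans hfV.symm) : Z = V)]
  refine ⟨j, hvj, (hf Z Y).mpr (by simpa [hfZ] using hcY), fun hZX => hcX ?_⟩
  simpa [hfZ] using (hf Z X).mp hZX

theorem weakLE_mul_wordProd_of_isPrefix {v : W} {ω α α' : List B} (hω : cs.IsReduced ω)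
    (hvω : weakLE cs v (v * π ω)) (hα : α <+: α') (hα' : α' <+: ω) :
    weakLE cs (v * π α) (v * π α') := by
  obtain ⟨γ, rfl⟩ := hα'
  obtain ⟨δ, rfl⟩ := hα
  have := cs.length_mul_le v (π α)
  have := cs.length_mul_le (v * π α) (π δ)
  have := cs.length_mul_le (v * π α * π δ) (π γ)
  have := cs.length_wordProd_le α
  have := cs.length_wordProd_le δ
  have := cs.length_wordProd_le γ
  rw [wordProd_append, ← mul_assoc, weakLE_self_mul_iff]
  rw [weakLE_self_mul_iff, hω.eq] at hvω
  simp only [wordProd_append, length_append, mul_assoc] at *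
  omega

theorem IsBooleanInterval.exists_ascent_word_eq_of_isPrefix {k : ℕ} {v w : W}
    (h : IsBooleanInterval cs k v w) {ω α : List B} (hω : cs.IsReduced ω) (hωvw : π ω = v⁻¹ * w)
    (hα : α <+: ω) : ∃ ρ : List B, π ρ = π α ∧ ∀ b ∈ ρ, weakLE cs v (v * s b) := by
  have hvω : weakLE cs v (v * π ω) := by
    rw [hωvw, mul_inv_cancel_left]
    exact h.1
  induction α using List.reverseRecOn with
  | nil => exact ⟨[], rfl, by simp⟩
  | append_singleton β a ih =>
    have hβ := (prefix_append β [a]).trans hα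
    obtain ⟨ρ, hρ, hρv⟩ := ih hβ
    have hvp : weakLE cs v (v * π β) := by
      simpa using weakLE_mul_wordProd_of_isPrefix hω hvω (nil_prefix (l := β)) hβ
    have hpa : weakLE cs (v * π β) (v * π β * s a) := by
      simpa [wordProd_append, mul_assoc] using
        weakLE_mul_wordProd_of_isPrefix hω hvω (prefix_append β [a]) hα
    have haw : weakLE cs (v * π β * s a) w := by
      simpa [wordProd_append, mul_assoc, hωvw] using
        weakLE_mul_wordProd_of_isPrefix hω hvω hα (prefix_refl ω)
    have hne : v * π β ≠ v * π β * s a := fun he =>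
      cs.length_mul_simple_ne (v * π β) a (by rw [← he])
    obtain ⟨j, hvj, hle, hnle⟩ := h.exists_mul_simple_weakLE_not_weakLE hvp hpa haw hne
    refine ⟨j :: ρ, ?_, forall_mem_cons.mpr ⟨hvj, hρv⟩⟩
    rw [wordProd_cons, hρ, wordProd_append, wordProd_singleton,
      simple_mul_eq_mul_simple_of_weakLE hvj hvp hpa hle hnle]

end WeakOrder

/-- If `[v, w]` is a Boolean interval in the right weak order, then
`supp(v⁻¹w) ∩ Des(v) = ∅`: no generator appearing in some reduced word for `v⁻¹w` is a
right descent of `v`. -/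
theorem support_inter_descents_eq_empty {B W : Type*} [Group W] {M : CoxeterMatrix B}
    (cs : CoxeterSystem M W) (v w : W) (k : ℕ) (h : IsBooleanInterval cs k v w) :
    ∀ i : B, (∃ ω : List B, cs.IsReduced ω ∧ cs.wordProd ω = v⁻¹ * w ∧ i ∈ ω) →
      ¬ cs.IsRightDescent v i := by
  rintro i ⟨ω, hω, hωvw, hi⟩
  obtain ⟨ρ, hρ, hρv⟩ := h.exists_ascent_word_eq_of_isPrefix hω hωvw (prefix_refl ω)
  obtain ⟨b, hb, hbi⟩ := mem_map.mp (hω.map_simple_subset hρ.symm (mem_map_of_mem hi))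
  exact weakLE_mul_simple_iff_not_isRightDescent.mp (hbi ▸ hρv b hb)
end

section
/- Define f_C(n, k) = 2^{n-k} · n! · binomial(n+1-k, k), the number of Boolean intervals of rank k in the weak order of C_n. Then for n ≥ 3, f_C(n, k) = 2n · f_C(n-1, k) + 2n(n-1) · f_C(n-2, k-1). -/
/-- `fC n k = 2^(n-k) · n! · C(n+1-k, k)`, the number of Boolean intervals of rank `k`
in the right weak order of the Coxeter group of type `Cₙ`. -/
def fC (n k : ℕ) : ℕ := 2 ^ (n - k) * n.factorial * Nat.choose (n + 1 - k) k

/-- For `n ≥ 3` and `k ≥ 1`,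
`fC(n, k) = 2n · fC(n-1, k) + 2n(n-1) · fC(n-2, k-1)`. -/
theorem fC_recurrence (n k : ℕ) (hn : 3 ≤ n) (hk : 1 ≤ k) :
    fC n k = 2 * n * fC (n - 1) k + 2 * n * (n - 1) * fC (n - 2) (k - 1) := by
  obtain ⟨k, rfl⟩ : ∃ k', k = k' + 1 := ⟨k - 1, by omega⟩
  rcases le_or_gt n (k + 1) with h | h
  · have e1 : n + 1 - (k + 1) = n - k := by omega
    have z1 : Nat.choose (n - k) (k + 1) = 0 :=
      Nat.choose_eq_zero_of_lt (by omega)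
    have z2 : Nat.choose (n - 1 - k) (k + 1) = 0 :=
      Nat.choose_eq_zero_of_lt (by omega)
    have z3 : Nat.choose (n - 2 + 1 - k) k = 0 :=
      Nat.choose_eq_zero_of_lt (by omega)
    simp [fC, z1, z2, z3]
  · obtain ⟨d, rfl⟩ : ∃ d, n = k + 2 + d := ⟨n - (k + 2), by omega⟩
    simp only [fC]
    have e1 : k + 2 + d - (k + 1) = d + 1 := by omega
    have e2 : k + 2 + d + 1 - (k + 1) = d + 2 := by omega
    have e3 : k + 2 + d - 1 = k + 1 + d := by omega
    have e4 : k + 1 + d - (k + 1) = d := by omega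
    have e5 : k + 1 + d + 1 - (k + 1) = d + 1 := by omega
    have e6 : k + 2 + d - 2 = k + d := by omega
    have e7 : k + 1 + 1 - 1 = k + 1 := by omega
    have e8 : k + 1 - 1 = k := by omega
    have e9 : k + d - k = d := by omega
    have e10 : k + d + 1 - k = d + 1 := by omega
    rw [e1, e2, e3, e4, e5, e6, e8, e9, e10]
    have pas : Nat.choose (d + 2) (k + 1) = Nat.choose (d + 1) k + Nat.choose (d + 1) (k + 1) :=
      Nat.choose_succ_succ (d + 1) k
    have f1 : (k + 2 + d).factorial = (k + 2 + d) * (k + 1 + d).factorial := by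
      have : k + 2 + d = (k + 1 + d) + 1 := by omega
      rw [this, Nat.factorial_succ]
    have f2 : (k + 1 + d).factorial = (k + 1 + d) * (k + d).factorial := by
      have : k + 1 + d = (k + d) + 1 := by omega
      rw [this, Nat.factorial_succ]
    rw [pas, f1, f2]
    ring
end
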